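/- Let A_1,…,A_m be events and J(1),…,J(m) ⊆ {1,…,m} such that each A_i is independent of the sigma-algebra generated by {A_j : j ∉ J(i) ∪ {i}}. Suppose there exist reals δ_1,…,δ_m with 0 < δ_i·P(A_i) < 0.69 for all i, and ln δ_i ≥ Σ_{j∈J(i)} 2 δ_j P(A_j) for all i. Then P(⋂_i A_iᶜ) ≥ Π_i (1 - δ_i P(A_i)) > 0. -/
import Mathlib


open MeasureTheory ProbabilityTheory

private lemma lll_key {Ω : Type*} [MeasurableSpace Ω] (μ : Measure Ω) [IsProbabilityMeasure μ]
    {m : ℕ} {A : Fin m → Set Ω} (hA : ∀ i, MeasurableSet (A i))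
    {J : Fin m → Finset (Fin m)}
    (hindep : ∀ i, Indep (MeasurableSpace.generateFrom {A i})
      (MeasurableSpace.generateFrom (A '' {j | j ∉ J i ∧ j ≠ i})) μ)
    {γ : Fin m → ℝ} (hγ0 : ∀ i, 0 ≤ γ i) (hγ1 : ∀ i, γ i ≤ 1)
    (hmain : ∀ i, (μ (A i)).toReal ≤ γ i * ∏ j ∈ J i, (1 - γ j)) :
    ∀ n : ℕ, ∀ S : Finset (Fin m), S.card ≤ n → ∀ i, i ∉ S →
      (μ (A i ∩ ⋂ j ∈ S, (A j)ᶜ)).toReal ≤ γ i * (μ (⋂ j ∈ S, (A j)ᶜ)).toReal := by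
  have hBmeas : ∀ S : Finset (Fin m), MeasurableSet (⋂ j ∈ S, (A j)ᶜ) :=
    fun S => Finset.measurableSet_biInter S fun j _ => (hA j).compl
  have hprodJ : ∀ i, ∏ j ∈ J i, (1 - γ j) ≤ 1 :=
    fun i => Finset.prod_le_one (fun j _ => by linarith [hγ1 j]) (fun j _ => by linarith [hγ0 j])
  -- independence consequence
  have hind : ∀ i, ∀ S₂ : Finset (Fin m), (∀ j ∈ S₂, j ∉ J i ∧ j ≠ i) →
      μ (A i ∩ ⋂ j ∈ S₂, (A j)ᶜ) = μ (A i) * μ (⋂ j ∈ S₂, (A j)ᶜ) := by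
    intro i S₂ hS₂
    have h1 : MeasurableSet[MeasurableSpace.generateFrom {A i}] (A i) :=
      MeasurableSpace.measurableSet_generateFrom rfl
    have h2 : MeasurableSet[MeasurableSpace.generateFrom (A '' {j | j ∉ J i ∧ j ≠ i})]
        (⋂ j ∈ S₂, (A j)ᶜ) := by
      refine Finset.measurableSet_biInter S₂ fun j hj => MeasurableSet.compl ?_
      exact MeasurableSpace.measurableSet_generateFrom ⟨j, hS₂ j hj, rfl⟩
    exact (Indep_iff _ _ μ).mp (hindep i) _ _ h1 h2
  intro n
  induction n with
  | zero =>
    intro S hS i _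
    have hS0 : S = ∅ := Finset.card_eq_zero.mp (Nat.le_zero.mp hS)
    subst hS0
    simp only [Finset.notMem_empty, Set.iInter_of_empty, Set.iInter_univ, Set.inter_univ,
      measure_univ, ENNReal.toReal_one, mul_one]
    calc (μ (A i)).toReal ≤ γ i * ∏ j ∈ J i, (1 - γ j) := hmain i
      _ ≤ γ i * 1 := by have := hprodJ i; nlinarith [hγ0 i]
      _ = γ i := mul_one _
  | succ n ihn =>
    intro S hS i hi
    classical
    set S₁ : Finset (Fin m) := S ∩ J i with hS₁def
    set S₂ : Finset (Fin m) := S \ J i with hS₂def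
    have hunion : S₁ ∪ S₂ = S := by
      ext x; simp only [hS₁def, hS₂def, Finset.mem_union, Finset.mem_inter, Finset.mem_sdiff]
      tauto
    have hdisj : Disjoint S₁ S₂ := by
      rw [Finset.disjoint_left]
      intro a ha ha'
      rw [hS₁def, Finset.mem_inter] at ha
      rw [hS₂def, Finset.mem_sdiff] at ha'
      exact ha'.2 ha.2
    have hcard12 : S₁.card + S₂.card = S.card := Finset.card_inter_add_card_sdiff S (J i)
    have hS₂prop : ∀ j ∈ S₂, j ∉ J i ∧ j ≠ i := by
      intro j hj
      rw [hS₂def, Finset.mem_sdiff] at hj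
      exact ⟨hj.2, fun h => hi (h ▸ hj.1)⟩
    -- relative product bound
    have rel : ∀ T : Finset (Fin m), Disjoint T S₂ → T.card + S₂.card ≤ n + 1 →
        (∏ j ∈ T, (1 - γ j)) * (μ (⋂ j ∈ S₂, (A j)ᶜ)).toReal ≤
          (μ (⋂ j ∈ T ∪ S₂, (A j)ᶜ)).toReal := by
      intro T
      induction T using Finset.induction_on with
      | empty => intro _ _; simp
      | @insert a T ha ihT =>
        intro hdis hc
        have hdis' : Disjoint T S₂ := hdis.mono_left (Finset.subset_insert a T)
        have haS₂ : a ∉ S₂ := Finset.disjoint_left.mp hdis (Finset.mem_insert_self a T)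
        have haU : a ∉ T ∪ S₂ := by simp [ha, haS₂]
        have hcT : T.card + S₂.card ≤ n := by
          rw [Finset.card_insert_of_notMem ha] at hc; omega
        have hcU : (T ∪ S₂).card ≤ n := le_trans (le_trans (Finset.card_union_le T S₂) (le_refl _)) hcT
        have hkey := ihn (T ∪ S₂) hcU a haU
        set U := T ∪ S₂ with hU
        set BU := ⋂ j ∈ U, (A j)ᶜ with hBU
        have hsplit : (μ (BU ∩ A a)).toReal + (μ (BU ∩ (A a)ᶜ)).toReal = (μ BU).toReal := by
          rw [← ENNReal.toReal_add (measure_ne_top μ _) (measure_ne_top μ _)]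
          congr 1
          rw [← Set.diff_eq]
          exact measure_inter_add_diff BU (hA a)
        have hAa : (μ (BU ∩ A a)).toReal ≤ γ a * (μ BU).toReal := by
          rw [Set.inter_comm]; exact hkey
        have h1 : (1 - γ a) * (μ BU).toReal ≤ (μ (BU ∩ (A a)ᶜ)).toReal := by nlinarith
        have h2 : (∏ j ∈ T, (1 - γ j)) * (μ (⋂ j ∈ S₂, (A j)ᶜ)).toReal ≤ (μ BU).toReal :=
          ihT hdis' (by omega)
        have hins : insert a T ∪ S₂ = insert a U := by rw [hU, Finset.insert_union]
        have hBins : ⋂ j ∈ insert a T ∪ S₂, (A j)ᶜ = BU ∩ (A a)ᶜ := by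
          rw [hins, Finset.set_biInter_insert, Set.inter_comm]
        rw [hBins, Finset.prod_insert ha]
        nlinarith [hγ0 a, hγ1 a, ENNReal.toReal_nonneg (a := μ (⋂ j ∈ S₂, (A j)ᶜ)),
          Finset.prod_nonneg (fun j (_ : j ∈ T) => by linarith [hγ1 j] : ∀ j ∈ T, (0:ℝ) ≤ 1 - γ j)]
    -- main estimate
    have hb₂ : 0 ≤ (μ (⋂ j ∈ S₂, (A j)ᶜ)).toReal := ENNReal.toReal_nonneg
    have hsub : (⋂ j ∈ S, (A j)ᶜ) ⊆ ⋂ j ∈ S₂, (A j)ᶜ := by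
      refine Set.subset_iInter₂ fun j hj => ?_
      have : j ∈ S := by rw [← hunion]; exact Finset.mem_union_right _ hj
      exact Set.biInter_subset_of_mem this
    have hnum : (μ (A i ∩ ⋂ j ∈ S, (A j)ᶜ)).toReal ≤
        (μ (A i)).toReal * (μ (⋂ j ∈ S₂, (A j)ᶜ)).toReal := by
      have hmono : μ (A i ∩ ⋂ j ∈ S, (A j)ᶜ) ≤ μ (A i ∩ ⋂ j ∈ S₂, (A j)ᶜ) :=
        measure_mono (Set.inter_subset_inter_right _ hsub)
      have := ENNReal.toReal_mono (measure_ne_top μ _) hmono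
      rw [hind i S₂ hS₂prop, ENNReal.toReal_mul] at this
      exact this
    have hden : (∏ j ∈ J i, (1 - γ j)) * (μ (⋂ j ∈ S₂, (A j)ᶜ)).toReal ≤
        (μ (⋂ j ∈ S, (A j)ᶜ)).toReal := by
      have hprodle : ∏ j ∈ J i, (1 - γ j) ≤ ∏ j ∈ S₁, (1 - γ j) := by
        have hsub₁ : S₁ ⊆ J i := by rw [hS₁def]; exact Finset.inter_subset_right
        have := Finset.prod_sdiff (f := fun j => 1 - γ j) hsub₁
        have hle1 : ∏ j ∈ J i \ S₁, (1 - γ j) ≤ 1 :=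
          Finset.prod_le_one (fun j _ => by linarith [hγ1 j]) (fun j _ => by linarith [hγ0 j])
        have hpos : 0 ≤ ∏ j ∈ S₁, (1 - γ j) :=
          Finset.prod_nonneg fun j _ => by linarith [hγ1 j]
        nlinarith
      calc (∏ j ∈ J i, (1 - γ j)) * (μ (⋂ j ∈ S₂, (A j)ᶜ)).toReal
          ≤ (∏ j ∈ S₁, (1 - γ j)) * (μ (⋂ j ∈ S₂, (A j)ᶜ)).toReal := by nlinarith
        _ ≤ (μ (⋂ j ∈ S₁ ∪ S₂, (A j)ᶜ)).toReal := rel S₁ hdisj (by omega)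
        _ = (μ (⋂ j ∈ S, (A j)ᶜ)).toReal := by rw [hunion]
    calc (μ (A i ∩ ⋂ j ∈ S, (A j)ᶜ)).toReal
        ≤ (μ (A i)).toReal * (μ (⋂ j ∈ S₂, (A j)ᶜ)).toReal := hnum
      _ ≤ (γ i * ∏ j ∈ J i, (1 - γ j)) * (μ (⋂ j ∈ S₂, (A j)ᶜ)).toReal := by
          nlinarith [hmain i]
      _ = γ i * ((∏ j ∈ J i, (1 - γ j)) * (μ (⋂ j ∈ S₂, (A j)ᶜ)).toReal) := by ring
      _ ≤ γ i * (μ (⋂ j ∈ S, (A j)ᶜ)).toReal := by nlinarith [hγ0 i, hden]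

private lemma lll_prod {Ω : Type*} [MeasurableSpace Ω] (μ : Measure Ω) [IsProbabilityMeasure μ]
    {m : ℕ} {A : Fin m → Set Ω} (hA : ∀ i, MeasurableSet (A i))
    {J : Fin m → Finset (Fin m)}
    (hindep : ∀ i, Indep (MeasurableSpace.generateFrom {A i})
      (MeasurableSpace.generateFrom (A '' {j | j ∉ J i ∧ j ≠ i})) μ)
    {γ : Fin m → ℝ} (hγ0 : ∀ i, 0 ≤ γ i) (hγ1 : ∀ i, γ i ≤ 1)
    (hmain : ∀ i, (μ (A i)).toReal ≤ γ i * ∏ j ∈ J i, (1 - γ j)) :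
    ∀ T : Finset (Fin m), (∏ j ∈ T, (1 - γ j)) ≤ (μ (⋂ j ∈ T, (A j)ᶜ)).toReal := by
  intro T
  classical
  induction T using Finset.induction_on with
  | empty => simp
  | @insert a T ha ihT =>
    have hkey := lll_key μ hA hindep hγ0 hγ1 hmain T.card T le_rfl a ha
    set BT := ⋂ j ∈ T, (A j)ᶜ with hBT
    have hsplit : (μ (BT ∩ A a)).toReal + (μ (BT ∩ (A a)ᶜ)).toReal = (μ BT).toReal := by
      rw [← ENNReal.toReal_add (measure_ne_top μ _) (measure_ne_top μ _)]
      congr 1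
      rw [← Set.diff_eq]
      exact measure_inter_add_diff BT (hA a)
    have hAa : (μ (BT ∩ A a)).toReal ≤ γ a * (μ BT).toReal := by
      rw [Set.inter_comm]; exact hkey
    have hBins : ⋂ j ∈ insert a T, (A j)ᶜ = BT ∩ (A a)ᶜ := by
      rw [Finset.set_biInter_insert, Set.inter_comm]
    rw [hBins, Finset.prod_insert ha]
    nlinarith [hγ0 a, hγ1 a,
      Finset.prod_nonneg (fun j (_ : j ∈ T) => by linarith [hγ1 j] : ∀ j ∈ T, (0:ℝ) ≤ 1 - γ j)]

theorem stmt_1 {Ω : Type*} [MeasurableSpace Ω] (μ : Measure Ω) [IsProbabilityMeasure μ]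
    (m : ℕ) (A : Fin m → Set Ω) (hA : ∀ i, MeasurableSet (A i))
    (J : Fin m → Finset (Fin m))
    (hindep : ∀ i, Indep (MeasurableSpace.generateFrom {A i})
      (MeasurableSpace.generateFrom (A '' {j | j ∉ J i ∧ j ≠ i})) μ)
    (δ : Fin m → ℝ)
    (hδ : ∀ i, 0 < δ i * (μ (A i)).toReal ∧ δ i * (μ (A i)).toReal < 0.69)
    (hcon : ∀ i, Real.log (δ i) ≥ ∑ j ∈ J i, 2 * δ j * (μ (A j)).toReal) :
    (μ (⋂ i, (A i)ᶜ)).toReal ≥ ∏ i, (1 - δ i * (μ (A i)).toReal) ∧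
      0 < ∏ i, (1 - δ i * (μ (A i)).toReal) := by
  have hγ0 : ∀ i, 0 ≤ δ i * (μ (A i)).toReal := fun i => (hδ i).1.le
  have hγ1 : ∀ i, δ i * (μ (A i)).toReal ≤ 1 := by
    intro i; have := (hδ i).2; norm_num at this; linarith
  have fact : ∀ x : ℝ, 0 ≤ x → x ≤ 0.69 → 1 ≤ (1 - x) * Real.exp (2 * x) := by
    intro x h0 h1
    have h2 := Real.quadratic_le_exp_of_nonneg (by linarith : (0:ℝ) ≤ 2 * x)
    norm_num at h1
    nlinarith [Real.exp_pos (2 * x), sq_nonneg x, mul_nonneg h0 (mul_nonneg h0 h0)]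
  have hmain : ∀ i, (μ (A i)).toReal ≤
      (δ i * (μ (A i)).toReal) * ∏ j ∈ J i, (1 - δ j * (μ (A j)).toReal) := by
    intro i
    have hp0 : 0 ≤ (μ (A i)).toReal := ENNReal.toReal_nonneg
    have hppos : 0 < (μ (A i)).toReal := by
      rcases lt_or_eq_of_le hp0 with h | h
      · exact h
      · exfalso; have := (hδ i).1; rw [← h] at this; simp at this
    have hδpos : 0 < δ i := by nlinarith [(hδ i).1]
    have hexp : Real.exp (∑ j ∈ J i, 2 * (δ j * (μ (A j)).toReal)) ≤ δ i := by
      have hsum : ∑ j ∈ J i, 2 * δ j * (μ (A j)).toReal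
          = ∑ j ∈ J i, 2 * (δ j * (μ (A j)).toReal) := by
        refine Finset.sum_congr rfl fun j _ => by ring
      calc Real.exp (∑ j ∈ J i, 2 * (δ j * (μ (A j)).toReal))
          ≤ Real.exp (Real.log (δ i)) := Real.exp_le_exp.mpr (by rw [← hsum]; exact hcon i)
        _ = δ i := Real.exp_log hδpos
    have hprodnn : 0 ≤ ∏ j ∈ J i, (1 - δ j * (μ (A j)).toReal) :=
      Finset.prod_nonneg fun j _ => by linarith [hγ1 j]
    have h1le : 1 ≤ (∏ j ∈ J i, (1 - δ j * (μ (A j)).toReal)) * δ i := by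
      have hstep : ∀ j ∈ J i, 1 ≤ (1 - δ j * (μ (A j)).toReal)
          * Real.exp (2 * (δ j * (μ (A j)).toReal)) :=
        fun j _ => fact _ (hγ0 j) (hδ j).2.le
      calc (1:ℝ) = ∏ _j ∈ J i, (1:ℝ) := Finset.prod_const_one.symm
        _ ≤ ∏ j ∈ J i, ((1 - δ j * (μ (A j)).toReal)
              * Real.exp (2 * (δ j * (μ (A j)).toReal))) :=
            Finset.prod_le_prod (fun j _ => zero_le_one) hstep
        _ = (∏ j ∈ J i, (1 - δ j * (μ (A j)).toReal))
              * ∏ j ∈ J i, Real.exp (2 * (δ j * (μ (A j)).toReal)) :=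
            Finset.prod_mul_distrib
        _ = (∏ j ∈ J i, (1 - δ j * (μ (A j)).toReal))
              * Real.exp (∑ j ∈ J i, 2 * (δ j * (μ (A j)).toReal)) := by
            rw [Real.exp_sum]
        _ ≤ (∏ j ∈ J i, (1 - δ j * (μ (A j)).toReal)) * δ i :=
            mul_le_mul_of_nonneg_left hexp hprodnn
    nlinarith
  have key := lll_prod μ hA hindep hγ0 hγ1 hmain Finset.univ
  have hiInter : ⋂ j ∈ (Finset.univ : Finset (Fin m)), (A j)ᶜ = ⋂ i, (A i)ᶜ := by simp
  constructor
  · rw [← hiInter]; exact key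
  · refine Finset.prod_pos fun i _ => ?_
    have := (hδ i).2; norm_num at this; linarith
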